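/- Let C be a d-circuit and W a sound nonnegative edge-weighting of C. Then there exists a tuple-weighting ω : R(C) → ℝ₊ such that for every edge e of C, W(e) = Σ_{τ ∈ R(e)} ω(τ), i.e., W is the edge-weighting induced by ω. -/

import Mathlib

open Finset

/-- Labels of gates in a `{∪,×}`-circuit: inputs `x/d`, union gates, product gates. -/
inductive GLabel (X D : Type) where
  | inp (x : X) (d : D)
  | union
  | prod

/-- Restriction of a (partial) tuple to a set of attributes. -/
def restrictTup {X D : Type} [DecidableEq X] (τ : X → Option D) (A : Finset X) :
    X → Option D :=
  fun x => if x ∈ A then τ x else none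

/-- A `{∪,×}`-circuit on attributes `X` and domain `D`: a finite DAG whose leaves are
labeled by singleton relations `x/d`, internal gates by `∪` or `×` (with the syntactic
restrictions on attribute sets), together with its semantics `rel`. -/
structure Circuit (X D : Type) [Fintype X] [Fintype D] [DecidableEq X] [DecidableEq D] where
  Gate : Type
  fg : Fintype Gate
  dg : DecidableEq Gate
  children : Gate → Finset Gate
  label : Gate → GLabel X D
  output : Gate
  attrs : Gate → Finset X
  rel : Gate → Finset (X → Option D)
  depth : Gate → ℕ
  depth_lt : ∀ u, ∀ c ∈ children u, depth c < depth u
  inp_no_children : ∀ u x d, label u = .inp x d → children u = ∅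
  internal_children_nonempty :
    ∀ u, (label u = .union ∨ label u = .prod) → (children u).Nonempty
  attrs_inp : ∀ u x d, label u = .inp x d → attrs u = {x}
  attrs_internal :
    ∀ u, (label u = .union ∨ label u = .prod) → attrs u = (children u).biUnion attrs
  union_attrs : ∀ u, label u = .union → ∀ c ∈ children u, attrs c = attrs u
  prod_attrs : ∀ u, label u = .prod →
    ∀ c₁ ∈ children u, ∀ c₂ ∈ children u, c₁ ≠ c₂ → Disjoint (attrs c₁) (attrs c₂)
  rel_support : ∀ u, ∀ τ ∈ rel u, ∀ x, (τ x).isSome ↔ x ∈ attrs u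
  rel_inp : ∀ u x d, label u = .inp x d →
    ∀ τ, τ ∈ rel u ↔ τ = (fun y => if y = x then some d else none)
  rel_union : ∀ u, label u = .union → ∀ τ, τ ∈ rel u ↔ ∃ c ∈ children u, τ ∈ rel c
  rel_prod : ∀ u, label u = .prod →
    ∀ τ, τ ∈ rel u ↔ ((∀ x, (τ x).isSome ↔ x ∈ attrs u) ∧
      ∀ c ∈ children u, restrictTup τ (attrs c) ∈ rel c)

attribute [instance] Circuit.fg Circuit.dg

namespace Circuit

variable {X D : Type} [Fintype X] [Fintype D] [DecidableEq X] [DecidableEq D]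

/-- A d-circuit: every `∪`-gate is disjoint (its children define pairwise
disjoint relations). -/
def DisjointUnions (C : Circuit X D) : Prop :=
  ∀ u, C.label u = .union → ∀ c₁ ∈ C.children u, ∀ c₂ ∈ C.children u,
    c₁ ≠ c₂ → Disjoint (C.rel c₁) (C.rel c₂)

/-- The gates of the proof-tree of a tuple `τ`: the output gate is in, and a child `u`
of an included gate `v` is included iff the restriction of `τ` to the attributes of
the subcircuit rooted at `u` belongs to the relation of `u`. -/
inductive InPT (C : Circuit X D) (τ : X → Option D) : C.Gate → Prop
  | out : InPT C τ C.output
  | step {u v : C.Gate} : InPT C τ v → u ∈ C.children v →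
      restrictTup τ (C.attrs u) ∈ C.rel u → InPT C τ u

/-- An edge `e = (u, v)` (from child `u` to parent `v`) belongs to the proof-tree
of `τ`. -/
def EdgeInPT (C : Circuit X D) (τ : X → Option D) (e : C.Gate × C.Gate) : Prop :=
  C.InPT τ e.2 ∧ e.1 ∈ C.children e.2 ∧ restrictTup τ (C.attrs e.1) ∈ C.rel e.1

/-- The edges of the circuit, directed from child to parent. -/
def edges (C : Circuit X D) : Finset (C.Gate × C.Gate) :=
  Finset.univ.filter (fun e => e.1 ∈ C.children e.2)

/-- Outgoing edges of a gate `u` (towards its parents). -/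
def outEdges (C : Circuit X D) (u : C.Gate) : Finset (C.Gate × C.Gate) :=
  C.edges.filter (fun e => e.1 = u)

/-- Ingoing edges of a gate `u` (from its children). -/
def inEdges (C : Circuit X D) (u : C.Gate) : Finset (C.Gate × C.Gate) :=
  C.edges.filter (fun e => e.2 = u)

open Classical in
/-- `R(e)`: the set of tuples of `R(C)` whose proof-tree contains the edge `e`. -/
noncomputable def relEdge (C : Circuit X D) (e : C.Gate × C.Gate) :
    Finset (X → Option D) :=
  (C.rel C.output).filter (fun τ => C.EdgeInPT τ e)

/-- Soundness of an edge-weighting: flow conservation at non-output `∪`-gates, and at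
`×`-gates all ingoing edges carry the same weight, which (for non-output gates)
equals the sum of the outgoing weights. -/
def Sound (C : Circuit X D) (W : C.Gate × C.Gate → ℝ) : Prop :=
  (∀ u, C.label u = .union → u ≠ C.output →
      ∑ i ∈ C.inEdges u, W i = ∑ o ∈ C.outEdges u, W o) ∧
  (∀ u, C.label u = .prod →
      (∀ i ∈ C.inEdges u, ∀ i' ∈ C.inEdges u, W i = W i') ∧
      (u ≠ C.output → ∀ i ∈ C.inEdges u, W i = ∑ o ∈ C.outEdges u, W o))

end Circuit

/-! Flow conservation carries any positive weight up to the output. From there one descends,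
following one positive edge at each `∪`-gate and all edges at each `×`-gate, to a tuple
`τ ∈ R(C)` whose whole proof tree carries positive weight. In a d-circuit that proof tree is an
honest tree (a `∪`-gate has exactly one child in it, every gate but the output exactly one
parent), so its indicator is itself sound, and it is the edge-weighting induced by the point
mass at `τ`. Subtracting `δ` times it, for `δ` the least weight on the tree, keeps `W` sound and
nonnegative and kills an edge; induction on the number of positive edges finishes the proof. -/

open Relation

theorem restrictTup_restrictTup {X D : Type} [DecidableEq X] {A B : Finset X} (h : B ⊆ A)
    (τ : X → Option D) : restrictTup (restrictTup τ A) B = restrictTup τ B := by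
  funext x
  by_cases hx : x ∈ B
  · simp [restrictTup, hx, h hx]
  · simp [restrictTup, hx]

theorem restrictTup_congr {X D : Type} [DecidableEq X] {A B : Finset X} {τ τ' : X → Option D}
    (h : restrictTup τ A = restrictTup τ' A) (hBA : B ⊆ A) :
    restrictTup τ B = restrictTup τ' B := by
  rw [← restrictTup_restrictTup hBA τ, h, restrictTup_restrictTup hBA]

theorem exists_restrictTup_eq {ι X D : Type} [DecidableEq X] (s : Finset ι) (A : ι → Finset X)
    (hA : ∀ i ∈ s, ∀ j ∈ s, i ≠ j → Disjoint (A i) (A j)) (F : ι → X → Option D) :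
    ∃ σ : X → Option D, (∀ i ∈ s, restrictTup σ (A i) = restrictTup (F i) (A i)) ∧
      ∀ x, (∀ i ∈ s, x ∉ A i) → σ x = none := by
  classical
  refine ⟨fun x => if h : ∃ i ∈ s, x ∈ A i then F h.choose x else none, fun i hi => ?_,
    fun x hx => dif_neg (by simpa using hx)⟩
  funext x
  by_cases hx : x ∈ A i
  · have h : ∃ i ∈ s, x ∈ A i := ⟨i, hi, hx⟩
    have hi' : h.choose = i := by
      by_contra hne
      exact disjoint_left.mp (hA _ h.choose_spec.1 i hi hne) h.choose_spec.2 hx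
    simp only [restrictTup, if_pos hx, dif_pos h, hi']
  · simp [restrictTup, hx]

namespace Circuit

variable {X D : Type} [Fintype X] [Fintype D] [DecidableEq X] [DecidableEq D] (C : Circuit X D)
  {τ τ' : X → Option D}

@[simp]
theorem mem_edges {e : C.Gate × C.Gate} : e ∈ C.edges ↔ e.1 ∈ C.children e.2 := by
  simp [edges]

@[simp]
theorem mem_inEdges {u : C.Gate} {e : C.Gate × C.Gate} :
    e ∈ C.inEdges u ↔ e.1 ∈ C.children e.2 ∧ e.2 = u := by
  simp [inEdges]

@[simp]
theorem mem_outEdges {u : C.Gate} {e : C.Gate × C.Gate} :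
    e ∈ C.outEdges u ↔ e.1 ∈ C.children e.2 ∧ e.1 = u := by
  simp [outEdges]

theorem attrs_subset_of_mem_children {u c : C.Gate} (hc : c ∈ C.children u) :
    C.attrs c ⊆ C.attrs u := by
  cases hl : C.label u with
  | inp x d => simp [C.inp_no_children u x d hl] at hc
  | union => rw [C.attrs_internal u (.inl hl)]; exact subset_biUnion_of_mem _ hc
  | prod => rw [C.attrs_internal u (.inr hl)]; exact subset_biUnion_of_mem _ hc

theorem attrs_nonempty (u : C.Gate) : (C.attrs u).Nonempty := by
  cases hl : C.label u with
  | inp x d => simp [C.attrs_inp u x d hl]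
  | union | prod =>
    obtain ⟨c, hc⟩ := C.internal_children_nonempty u (by simp [hl])
    have := C.depth_lt u c hc
    exact (attrs_nonempty c).mono (C.attrs_subset_of_mem_children hc)
termination_by C.depth u

theorem restrictTup_of_mem_rel {u : C.Gate} (h : τ ∈ C.rel u) :
    restrictTup τ (C.attrs u) = τ := by
  funext x
  by_cases hx : x ∈ C.attrs u
  · simp [restrictTup, hx]
  · have := (C.rel_support u τ h x).not.mpr hx
    simp_all [restrictTup]

/-- `u` is a child of `v` in the proof tree of `τ`, provided `v` is. -/
def PTChild (τ : X → Option D) (v u : C.Gate) : Prop :=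
  u ∈ C.children v ∧ restrictTup τ (C.attrs u) ∈ C.rel u

theorem inPT_iff_reflTransGen {u : C.Gate} :
    C.InPT τ u ↔ ReflTransGen (C.PTChild τ) C.output u := by
  constructor
  · intro h
    induction h with
    | out => exact .refl
    | step _ hu hr ih => exact ih.tail ⟨hu, hr⟩
  · intro h
    induction h with
    | refl => exact .out
    | tail _ h ih => exact .step ih h.1 h.2

theorem edgeInPT_iff {e : C.Gate × C.Gate} :
    C.EdgeInPT τ e ↔ ReflTransGen (C.PTChild τ) C.output e.2 ∧ C.PTChild τ e.2 e.1 := by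
  rw [EdgeInPT, inPT_iff_reflTransGen, PTChild]

variable {C} in
theorem EdgeInPT.inPT_fst {e : C.Gate × C.Gate} (h : C.EdgeInPT τ e) :
    C.InPT τ e.1 :=
  .step h.1 h.2.1 h.2.2

theorem restrictTup_mem_rel_of_inPT {u : C.Gate}
    (hτ : τ ∈ C.rel C.output) (hu : C.InPT τ u) : restrictTup τ (C.attrs u) ∈ C.rel u := by
  cases hu with
  | out => rwa [C.restrictTup_of_mem_rel hτ]
  | step _ _ hr => exact hr

theorem depth_le_of_reflTransGen {a b : C.Gate}
    (h : ReflTransGen (C.PTChild τ) a b) : C.depth b ≤ C.depth a := by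
  induction h with
  | refl => rfl
  | tail _ hbc ih => exact (C.depth_lt _ _ hbc.1).le.trans ih

theorem attrs_subset_of_reflTransGen {a b : C.Gate}
    (h : ReflTransGen (C.PTChild τ) a b) : C.attrs b ⊆ C.attrs a := by
  induction h with
  | refl => rfl
  | tail _ hbc ih => exact (C.attrs_subset_of_mem_children hbc.1).trans ih

theorem ptChild_congr {A : Finset X} {a b : C.Gate}
    (h : restrictTup τ A = restrictTup τ' A) (hb : C.attrs b ⊆ A) :
    C.PTChild τ a b ↔ C.PTChild τ' a b := by
  rw [PTChild, PTChild, restrictTup_congr h hb]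

theorem reflTransGen_ptChild_congr {r a : C.Gate}
    (h : restrictTup τ (C.attrs r) = restrictTup τ' (C.attrs r))
    (hra : ReflTransGen (C.PTChild τ) r a) : ReflTransGen (C.PTChild τ') r a := by
  induction hra with
  | refl => exact .refl
  | tail hrb hbc ih =>
    have hsub := (C.attrs_subset_of_mem_children hbc.1).trans (C.attrs_subset_of_reflTransGen hrb)
    exact ih.tail ((C.ptChild_congr h hsub).mp hbc)

theorem ptChild_of_prod {v c : C.Gate} (hl : C.label v = .prod)
    (hc : c ∈ C.children v) (h : restrictTup τ (C.attrs v) ∈ C.rel v) : C.PTChild τ v c := by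
  have := ((C.rel_prod v hl _).mp h).2 c hc
  rw [restrictTup_restrictTup (C.attrs_subset_of_mem_children hc)] at this
  exact ⟨hc, this⟩

theorem exists_ptChild_of_union {v : C.Gate} (hl : C.label v = .union)
    (h : restrictTup τ (C.attrs v) ∈ C.rel v) : ∃ c, C.PTChild τ v c := by
  obtain ⟨c, hc, hrc⟩ := (C.rel_union v hl _).mp h
  exact ⟨c, hc, by rwa [C.union_attrs v hl c hc]⟩

theorem exists_ptChild {v : C.Gate} (h : restrictTup τ (C.attrs v) ∈ C.rel v)
    (hne : (C.children v).Nonempty) : ∃ c, C.PTChild τ v c := by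
  cases hl : C.label v with
  | inp x d => simp [C.inp_no_children v x d hl] at hne
  | union => exact C.exists_ptChild_of_union hl h
  | prod =>
    obtain ⟨c, hc⟩ := hne
    exact ⟨c, C.ptChild_of_prod hl hc h⟩

theorem eq_of_ptChild_of_mem_attrs (hd : C.DisjointUnions)
    {v c₁ c₂ : C.Gate} {x : X} (h₁ : C.PTChild τ v c₁) (h₂ : C.PTChild τ v c₂)
    (hx₁ : x ∈ C.attrs c₁) (hx₂ : x ∈ C.attrs c₂) : c₁ = c₂ := by
  by_contra hne
  cases hl : C.label v with
  | inp x d => simpa [C.inp_no_children v x d hl] using h₁.1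
  | union =>
    have hr₁ := h₁.2
    have hr₂ := h₂.2
    rw [C.union_attrs v hl c₁ h₁.1] at hr₁
    rw [C.union_attrs v hl c₂ h₂.1] at hr₂
    exact disjoint_left.mp (hd v hl c₁ h₁.1 c₂ h₂.1 hne) hr₁ hr₂
  | prod => exact disjoint_left.mp (C.prod_attrs v hl c₁ h₁.1 c₂ h₂.1 hne) hx₁ hx₂

theorem eq_of_ptChild_of_inPT (hd : C.DisjointUnions) {u w₁ w₂ : C.Gate}
    (h₁ : C.InPT τ w₁) (h₂ : C.InPT τ w₂) (hu₁ : C.PTChild τ w₁ u)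
    (hu₂ : C.PTChild τ w₂ u) : w₁ = w₂ := by
  obtain ⟨x, hx⟩ := C.attrs_nonempty u
  -- Following the children that contain `x` is deterministic, so the gates of the proof tree
  -- containing `x` form a chain.
  let R : C.Gate → C.Gate → Prop := fun a b => C.PTChild τ a b ∧ x ∈ C.attrs b
  have hR : Relator.RightUnique R := fun _ _ _ hb hc =>
    C.eq_of_ptChild_of_mem_attrs hd hb.1 hc.1 hb.2 hc.2
  have lift : ∀ {w}, ReflTransGen (C.PTChild τ) C.output w → x ∈ C.attrs w →
      ReflTransGen R C.output w := by
    intro w hw hxw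
    induction hw with
    | refl => exact .refl
    | tail _ hbw ih => exact (ih (C.attrs_subset_of_mem_children hbw.1 hxw)).tail ⟨hbw, hxw⟩
  have key : ∀ {w w'}, ReflTransGen R w w' → R w u → C.PTChild τ w' u → w = w' := by
    intro w w' h hw hw'
    rcases h.cases_head with rfl | ⟨g, hg, hgw'⟩
    · rfl
    · obtain rfl := hR hg hw
      have := C.depth_le_of_reflTransGen (ReflTransGen.mono (fun _ _ h => h.1) _ _ hgw')
      have := C.depth_lt _ _ hw'.1
      omega
  have hx₁ := lift (C.inPT_iff_reflTransGen.mp h₁) (C.attrs_subset_of_mem_children hu₁.1 hx)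
  have hx₂ := lift (C.inPT_iff_reflTransGen.mp h₂) (C.attrs_subset_of_mem_children hu₂.1 hx)
  rcases hx₁.total_of_right_unique hR hx₂ with h | h
  · exact key h ⟨hu₁, hx⟩ hu₂
  · exact (key h ⟨hu₂, hx⟩ hu₁).symm

open Classical in
noncomputable def ptEdges (τ : X → Option D) : Finset (C.Gate × C.Gate) :=
  C.edges.filter (C.EdgeInPT τ)

@[simp]
theorem mem_ptEdges {e : C.Gate × C.Gate} :
    e ∈ C.ptEdges τ ↔ C.EdgeInPT τ e := by
  simpa [ptEdges] using fun h : C.EdgeInPT τ e => h.2.1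

noncomputable def ptIndicator (τ : X → Option D) (e : C.Gate × C.Gate) : ℝ :=
  if e ∈ C.ptEdges τ then 1 else 0

open Classical in
theorem sum_ptIndicator_outEdges (hd : C.DisjointUnions) {u : C.Gate}
    (hu : u ≠ C.output) :
    ∑ o ∈ C.outEdges u, C.ptIndicator τ o = if C.InPT τ u then 1 else 0 := by
  split_ifs with hin
  · obtain ⟨w, hw⟩ : ∃ w, C.EdgeInPT τ (u, w) := by
      cases hin with
      | out => exact absurd rfl hu
      | step hv hc hr => exact ⟨_, hv, hc, hr⟩
    rw [sum_eq_single_of_mem (u, w) (by simpa using hw.2.1)]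
    · simp [ptIndicator, hw]
    · rintro ⟨u', w'⟩ ho hne
      obtain ⟨-, rfl⟩ : _ ∧ u' = u := C.mem_outEdges.mp ho
      rw [ptIndicator, if_neg]
      intro hw'
      rw [mem_ptEdges] at hw'
      exact hne (congrArg (Prod.mk u') (C.eq_of_ptChild_of_inPT hd hw'.1 hw.1 hw'.2 hw.2))
  · refine sum_eq_zero fun o ho => if_neg fun h => hin ?_
    rw [← (C.mem_outEdges.mp ho).2]
    exact (C.mem_ptEdges.mp h).inPT_fst

open Classical in
theorem sum_ptIndicator_inEdges_of_union (hd : C.DisjointUnions)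
    {u : C.Gate} (hτ : τ ∈ C.rel C.output) (hl : C.label u = .union) :
    ∑ i ∈ C.inEdges u, C.ptIndicator τ i = if C.InPT τ u then 1 else 0 := by
  split_ifs with hin
  · obtain ⟨c, hcu⟩ := C.exists_ptChild_of_union hl (C.restrictTup_mem_rel_of_inPT hτ hin)
    rw [sum_eq_single_of_mem (c, u) (by simpa using hcu.1)]
    · simp [ptIndicator, EdgeInPT, hin, hcu.1, hcu.2]
    · rintro ⟨c', u'⟩ hi hne
      obtain ⟨hc', rfl⟩ : c' ∈ C.children u' ∧ u' = u := C.mem_inEdges.mp hi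
      rw [ptIndicator, if_neg]
      intro h
      rw [mem_ptEdges] at h
      obtain ⟨x, hx⟩ := C.attrs_nonempty c
      have hx' : x ∈ C.attrs c' := by
        rwa [C.union_attrs u' hl c' hc', ← C.union_attrs u' hl c hcu.1]
      exact hne (congrArg (·, u') (C.eq_of_ptChild_of_mem_attrs hd h.2 hcu hx' hx))
  · refine sum_eq_zero fun i hi => if_neg fun h => hin ?_
    rw [← (C.mem_inEdges.mp hi).2]
    exact (C.mem_ptEdges.mp h).1

open Classical in
theorem ptIndicator_of_mem_inEdges_of_prod {u : C.Gate}
    {i : C.Gate × C.Gate} (hτ : τ ∈ C.rel C.output) (hl : C.label u = .prod)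
    (hi : i ∈ C.inEdges u) : C.ptIndicator τ i = if C.InPT τ u then 1 else 0 := by
  obtain ⟨hc, rfl⟩ := C.mem_inEdges.mp hi
  by_cases hin : C.InPT τ i.2
  · have := C.ptChild_of_prod hl hc (C.restrictTup_mem_rel_of_inPT hτ hin)
    simp [ptIndicator, EdgeInPT, hin, this.1, this.2]
  · simp [ptIndicator, EdgeInPT, hin]

theorem sound_ptIndicator (hd : C.DisjointUnions)
    (hτ : τ ∈ C.rel C.output) : C.Sound (C.ptIndicator τ) := by
  refine ⟨fun u hl hu => ?_, fun u hl => ⟨fun i hi i' hi' => ?_, fun hu i hi => ?_⟩⟩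
  · rw [C.sum_ptIndicator_inEdges_of_union hd hτ hl, C.sum_ptIndicator_outEdges hd hu]
  · rw [C.ptIndicator_of_mem_inEdges_of_prod hτ hl hi,
      C.ptIndicator_of_mem_inEdges_of_prod hτ hl hi']
  · rw [C.ptIndicator_of_mem_inEdges_of_prod hτ hl hi, C.sum_ptIndicator_outEdges hd hu]

variable {C} in
theorem Sound.sub {W V : C.Gate × C.Gate → ℝ} (hW : C.Sound W) (hV : C.Sound V) :
    C.Sound (W - V) := by
  refine ⟨fun u hl hu => ?_, fun u hl => ⟨fun i hi i' hi' => ?_, fun hu i hi => ?_⟩⟩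
  · simp only [Pi.sub_apply, sum_sub_distrib, hW.1 u hl hu, hV.1 u hl hu]
  · simp only [Pi.sub_apply, (hW.2 u hl).1 i hi i' hi', (hV.2 u hl).1 i hi i' hi']
  · simp only [Pi.sub_apply, sum_sub_distrib, (hW.2 u hl).2 hu i hi, (hV.2 u hl).2 hu i hi]

variable {C} in
theorem Sound.smul {V : C.Gate × C.Gate → ℝ} (hV : C.Sound V) (a : ℝ) :
    C.Sound (a • V) := by
  refine ⟨fun u hl hu => ?_, fun u hl => ⟨fun i hi i' hi' => ?_, fun hu i hi => ?_⟩⟩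
  · simp only [Pi.smul_apply, smul_eq_mul, ← mul_sum, hV.1 u hl hu]
  · simp only [Pi.smul_apply, (hV.2 u hl).1 i hi i' hi']
  · simp only [Pi.smul_apply, smul_eq_mul, ← mul_sum, (hV.2 u hl).2 hu i hi]

noncomputable def posEdges (W : C.Gate × C.Gate → ℝ) : Finset (C.Gate × C.Gate) :=
  {e ∈ C.edges | 0 < W e}

@[simp]
theorem mem_posEdges {W : C.Gate × C.Gate → ℝ} {e : C.Gate × C.Gate} :
    e ∈ C.posEdges W ↔ e ∈ C.edges ∧ 0 < W e :=
  mem_filter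

section Flow

variable {C} {W : C.Gate × C.Gate → ℝ}

theorem exists_pos_outEdge (hW0 : ∀ e, 0 ≤ W e) (hs : C.Sound W) {u c : C.Gate}
    (hu : u ≠ C.output) (hc : c ∈ C.children u) (hpos : 0 < W (c, u)) :
    ∃ w, u ∈ C.children w ∧ 0 < W (u, w) := by
  have hout : 0 < ∑ o ∈ C.outEdges u, W o := by
    cases hl : C.label u with
    | inp x d => simp [C.inp_no_children u x d hl] at hc
    | union =>
      rw [← hs.1 u hl hu]
      exact hpos.trans_le (single_le_sum (fun i _ => hW0 i) (by simpa using hc))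
    | prod => rwa [← (hs.2 u hl).2 hu (c, u) (by simpa using hc)]
  obtain ⟨⟨u', w⟩, ho, hw⟩ := exists_lt_of_sum_lt (f := 0) (g := W) (by simpa using hout)
  obtain ⟨hw', rfl⟩ : u' ∈ C.children w ∧ u' = u := C.mem_outEdges.mp ho
  exact ⟨w, hw', hw⟩

theorem exists_pos_inEdge_output (hW0 : ∀ e, 0 ≤ W e) (hs : C.Sound W) {e : C.Gate × C.Gate}
    (he : e ∈ C.edges) (hpos : 0 < W e) : ∃ c ∈ C.children C.output, 0 < W (c, C.output) := by
  obtain ⟨⟨c, u⟩, hmem, hmax⟩ :=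
    exists_max_image (C.posEdges W) (fun e => C.depth e.2)
      ⟨e, C.mem_posEdges.mpr ⟨he, hpos⟩⟩
  simp only [mem_posEdges, mem_edges] at hmem
  by_cases hu : u = C.output
  · subst hu
    exact ⟨c, hmem⟩
  · obtain ⟨w, hw, hpos'⟩ := exists_pos_outEdge hW0 hs hu hmem.1 hmem.2
    have : C.depth w ≤ C.depth u := hmax (u, w) (by simp [hw, hpos'])
    have := C.depth_lt w u hw
    omega

variable (C) in
def Active (W : C.Gate × C.Gate → ℝ) (v : C.Gate) : Prop :=
  (C.label v = .union → ∃ c ∈ C.children v, 0 < W (c, v)) ∧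
    (C.label v = .prod → ∀ c ∈ C.children v, 0 < W (c, v))

theorem active_of_pos_outEdge (hW0 : ∀ e, 0 ≤ W e) (hs : C.Sound W) {u w : C.Gate}
    (hu : u ≠ C.output) (hw : u ∈ C.children w) (hpos : 0 < W (u, w)) : C.Active W u := by
  have hout : 0 < ∑ o ∈ C.outEdges u, W o :=
    hpos.trans_le (single_le_sum (fun i _ => hW0 i) (by simpa using hw))
  refine ⟨fun hl => ?_, fun hl c hc => ?_⟩
  · rw [← hs.1 u hl hu] at hout
    obtain ⟨⟨c, u'⟩, hi, hc⟩ := exists_lt_of_sum_lt (f := 0) (g := W) (by simpa using hout)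
    obtain ⟨hc', rfl⟩ : c ∈ C.children u' ∧ u' = u := C.mem_inEdges.mp hi
    exact ⟨c, hc', hc⟩
  · rwa [(hs.2 u hl).2 hu (c, u) (by simpa using hc)]

theorem active_output (hs : C.Sound W) {c : C.Gate} (hc : c ∈ C.children C.output)
    (hpos : 0 < W (c, C.output)) : C.Active W C.output :=
  ⟨fun _ => ⟨c, hc, hpos⟩, fun hl c' hc' => by
    rwa [(hs.2 _ hl).1 (c', C.output) (by simpa using hc') (c, C.output) (by simpa using hc)]⟩

end Flow

def PosProofTree (W : C.Gate × C.Gate → ℝ) (v : C.Gate) (σ : X → Option D) : Prop :=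
  σ ∈ C.rel v ∧ ∀ a b, ReflTransGen (C.PTChild σ) v a → C.PTChild σ a b → 0 < W (b, a)

section PosProofTree

variable {W : C.Gate × C.Gate → ℝ} {v : C.Gate}

theorem posProofTree_of_inp {x : X} {d : D} (hl : C.label v = .inp x d) :
    C.PosProofTree W v (fun y => if y = x then some d else none) := by
  refine ⟨(C.rel_inp v x d hl _).mpr rfl, fun a b hva hab => ?_⟩
  have hch := C.inp_no_children v x d hl
  rcases hva.cases_head with rfl | ⟨g, hg, -⟩
  · simp [PTChild, hch] at hab
  · simp [PTChild, hch] at hg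

theorem posProofTree_of_union (hd : C.DisjointUnions) (hl : C.label v = .union) {c : C.Gate}
    (hc : c ∈ C.children v) (hpos : 0 < W (c, v)) {σ : X → Option D}
    (h : C.PosProofTree W c σ) : C.PosProofTree W v σ := by
  obtain ⟨hσ, hpt⟩ := h
  have huniq : ∀ b, C.PTChild σ v b → b = c := by
    rintro b ⟨hb, hbσ⟩
    rw [C.union_attrs v hl b hb, ← C.union_attrs v hl c hc, C.restrictTup_of_mem_rel hσ] at hbσ
    by_contra hne
    exact disjoint_left.mp (hd v hl b hb c hc hne) hbσ hσ
  refine ⟨(C.rel_union v hl σ).mpr ⟨c, hc, hσ⟩, fun a b hva hab => ?_⟩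
  rcases hva.cases_head with rfl | ⟨g, hg, hga⟩
  · rwa [huniq b hab]
  · exact hpt a b (huniq g hg ▸ hga) hab

theorem exists_posProofTree_of_prod (hl : C.label v = .prod)
    (hpos : ∀ c ∈ C.children v, 0 < W (c, v)) {F : C.Gate → X → Option D}
    (hF : ∀ c ∈ C.children v, C.PosProofTree W c (F c)) : ∃ σ, C.PosProofTree W v σ := by
  obtain ⟨σ, hσF, hσnone⟩ :=
    exists_restrictTup_eq (C.children v) C.attrs (C.prod_attrs v hl) F
  have hσ : ∀ c ∈ C.children v, restrictTup σ (C.attrs c) = F c := fun c hc =>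
    (hσF c hc).trans (C.restrictTup_of_mem_rel (hF c hc).1)
  have hsupport : ∀ x, (σ x).isSome ↔ x ∈ C.attrs v := by
    intro x
    rw [C.attrs_internal v (.inr hl), mem_biUnion]
    by_cases hx : ∃ c ∈ C.children v, x ∈ C.attrs c
    · obtain ⟨c, hc, hxc⟩ := hx
      have hσx : σ x = F c x := by simpa [restrictTup, hxc] using congrFun (hσ c hc) x
      rw [hσx, C.rel_support c _ (hF c hc).1 x]
      exact iff_of_true hxc ⟨c, hc, hxc⟩
    · simpa [hσnone x (by simpa using hx)] using hx
  refine ⟨σ, (C.rel_prod v hl σ).mpr ⟨hsupport, fun c hc => (hσ c hc) ▸ (hF c hc).1⟩,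
    fun a b hva hab => ?_⟩
  rcases hva.cases_head with rfl | ⟨c, hc, hca⟩
  · exact hpos b hab.1
  · have hagree : restrictTup σ (C.attrs c) = restrictTup (F c) (C.attrs c) := by
      rw [hσ c hc.1, C.restrictTup_of_mem_rel (hF c hc.1).1]
    have hsub := (C.attrs_subset_of_mem_children hab.1).trans (C.attrs_subset_of_reflTransGen hca)
    exact (hF c hc.1).2 a b (C.reflTransGen_ptChild_congr hagree hca)
      ((C.ptChild_congr hagree hsub).mp hab)

theorem exists_posProofTree (hd : C.DisjointUnions) (hW0 : ∀ e, 0 ≤ W e) (hs : C.Sound W)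
    (v : C.Gate) (hv : C.depth v ≤ C.depth C.output) (hact : C.Active W v) :
    ∃ σ, C.PosProofTree W v σ := by
  have ih : ∀ c ∈ C.children v, 0 < W (c, v) → ∃ σ, C.PosProofTree W c σ := by
    intro c hc hpos
    have hlt := C.depth_lt v c hc
    exact exists_posProofTree hd hW0 hs c (by omega)
      (active_of_pos_outEdge hW0 hs (by rintro rfl; omega) hc hpos)
  cases hl : C.label v with
  | inp x d => exact ⟨_, C.posProofTree_of_inp hl⟩
  | union =>
    obtain ⟨c, hc, hpos⟩ := hact.1 hl
    obtain ⟨σ, hσ⟩ := ih c hc hpos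
    exact ⟨σ, C.posProofTree_of_union hd hl hc hpos hσ⟩
  | prod =>
    choose! F hF using fun c hc => ih c hc (hact.2 hl c hc)
    exact C.exists_posProofTree_of_prod hl (hact.2 hl) hF
termination_by C.depth v

end PosProofTree

section Induced

variable {W : C.Gate × C.Gate → ℝ}

theorem exists_pos_on_ptEdges (hd : C.DisjointUnions) (hW0 : ∀ e, 0 ≤ W e) (hs : C.Sound W)
    {e : C.Gate × C.Gate} (he : e ∈ C.edges) (hpos : 0 < W e) :
    ∃ τ ∈ C.rel C.output, (C.ptEdges τ).Nonempty ∧ ∀ e ∈ C.ptEdges τ, 0 < W e := by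
  obtain ⟨c, hc, hcpos⟩ := exists_pos_inEdge_output hW0 hs he hpos
  obtain ⟨τ, hτ, hpt⟩ :=
    C.exists_posProofTree hd hW0 hs C.output le_rfl (active_output hs hc hcpos)
  obtain ⟨c', hc'⟩ := C.exists_ptChild ((C.restrictTup_of_mem_rel hτ).symm ▸ hτ) ⟨c, hc⟩
  have hc'τ : (c', C.output) ∈ C.ptEdges τ := by
    rw [mem_ptEdges, edgeInPT_iff]
    exact ⟨.refl, hc'⟩
  refine ⟨τ, hτ, ⟨_, hc'τ⟩, fun e he => ?_⟩
  rw [mem_ptEdges, edgeInPT_iff] at he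
  exact hpt e.2 e.1 he.1 he.2

theorem exists_sub_smul_ptIndicator (hW0 : ∀ e, 0 ≤ W e)
    (hne : (C.ptEdges τ).Nonempty) (hpos : ∀ e ∈ C.ptEdges τ, 0 < W e) :
    ∃ δ : ℝ, 0 < δ ∧ (∀ e, 0 ≤ (W - δ • C.ptIndicator τ) e) ∧
      C.posEdges (W - δ • C.ptIndicator τ) ⊂ C.posEdges W := by
  obtain ⟨e₀, he₀, hmin⟩ := exists_min_image _ W hne
  have hI : ∀ e, 0 ≤ (W e₀ • C.ptIndicator τ) e := fun e => by
    by_cases he : e ∈ C.ptEdges τ <;> simp [ptIndicator, he, hW0]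
  have hle : ∀ e, (W e₀ • C.ptIndicator τ) e ≤ W e := fun e => by
    by_cases he : e ∈ C.ptEdges τ <;> simp [ptIndicator, he, hmin, hW0]
  refine ⟨W e₀, hpos e₀ he₀, fun e => sub_nonneg.mpr (hle e), ?_⟩
  rw [ssubset_iff_of_subset]
  · refine ⟨e₀, ?_, ?_⟩
    · simpa [hpos e₀ he₀] using (C.mem_ptEdges.mp he₀).2.1
    · simp [ptIndicator, he₀]
  · intro e he
    simp only [mem_posEdges, Pi.sub_apply, sub_pos] at he ⊢
    exact ⟨he.1, (hI e).trans_lt he.2⟩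

variable (W) in
def IsInduced : Prop :=
  ∃ ω : (X → Option D) → ℝ, (∀ τ ∈ C.rel C.output, 0 ≤ ω τ) ∧
    ∀ e ∈ C.edges, W e = ∑ τ ∈ C.relEdge e, ω τ

theorem isInduced_of_posEdges_eq_empty (h : C.posEdges W = ∅) (hW0 : ∀ e, 0 ≤ W e) :
    C.IsInduced W := by
  refine ⟨0, fun _ _ => le_rfl, fun e he => ?_⟩
  have : ¬ 0 < W e := fun hpos => eq_empty_iff_forall_notMem.mp h e (by simp [he, hpos])
  simp [le_antisymm (not_lt.mp this) (hW0 e)]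

variable {C} in
theorem IsInduced.add_smul_ptIndicator (h : C.IsInduced W)
    (hτ : τ ∈ C.rel C.output) {δ : ℝ} (hδ : 0 ≤ δ) :
    C.IsInduced (W + δ • C.ptIndicator τ) := by
  obtain ⟨ω, hω0, hω⟩ := h
  refine ⟨fun σ => ω σ + if σ = τ then δ else 0, fun σ hσ => ?_, fun e he => ?_⟩
  · exact add_nonneg (hω0 σ hσ) (by positivity)
  · have hmem : τ ∈ C.relEdge e ↔ e ∈ C.ptEdges τ := by simp [relEdge, hτ]
    by_cases he' : e ∈ C.ptEdges τ <;>
      simp [sum_add_distrib, ← hω e he, ptIndicator, he', hmem]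

theorem isInduced_of_sound (hd : C.DisjointUnions) (W : C.Gate × C.Gate → ℝ)
    (hW0 : ∀ e, 0 ≤ W e) (hs : C.Sound W) : C.IsInduced W := by
  by_cases h : C.posEdges W = ∅
  · exact C.isInduced_of_posEdges_eq_empty h hW0
  obtain ⟨e, he⟩ := nonempty_iff_ne_empty.mpr h
  obtain ⟨he, hpos⟩ := C.mem_posEdges.mp he
  obtain ⟨τ, hτ, hne, hτpos⟩ := C.exists_pos_on_ptEdges hd hW0 hs he hpos
  obtain ⟨δ, hδ, hW'0, hlt⟩ := C.exists_sub_smul_ptIndicator hW0 hne hτpos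
  have := isInduced_of_sound hd _ hW'0 (hs.sub ((C.sound_ptIndicator hd hτ).smul δ))
  simpa only [sub_add_cancel] using this.add_smul_ptIndicator hτ hδ.le
termination_by (C.posEdges W).card
decreasing_by exact card_lt_card hlt

end Induced

end Circuit

/-- For every sound nonnegative edge-weighting `W` of a d-circuit, there exists a
tuple-weighting `ω` of `R(C)` inducing `W`, i.e. `W(e) = Σ_{τ ∈ R(e)} ω(τ)` for
every edge `e`. -/
theorem sound_edge_weighting_is_induced {X D : Type} [Fintype X] [Fintype D]
    [DecidableEq X] [DecidableEq D]
    (C : Circuit X D) (hd : C.DisjointUnions)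
    (W : C.Gate × C.Gate → ℝ) (hW0 : ∀ e, 0 ≤ W e) (hsound : C.Sound W) :
    ∃ ω : (X → Option D) → ℝ,
      (∀ τ ∈ C.rel C.output, 0 ≤ ω τ) ∧
      ∀ e ∈ C.edges, W e = ∑ τ ∈ C.relEdge e, ω τ :=
  C.isInduced_of_sound hd W hW0 hsound
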